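/- For every hypergraph 𝐑, the collection Ξ_𝐑 of all preteams ({𝐑_{V_a} : a ∈ A}, 𝐑_V), where {V_a}_{a∈A} partitions V and all the restrictions 𝐑_{V_a} and 𝐑_V are connected, is an associative strict clan: (i) every such preteam is a strict team; (ii) the induced preteams obtained by removing root sets are again in Ξ_𝐑; and (iii) grafting a preteam of Ξ_𝐑 into another along a matching participating hypergraph yields a preteam in Ξ_𝐑. -/

import Mathlib

/-! Basic hypergraph notions (following Došen–Petrić / Curien–Obradović–Ivanović). -/

variable {α : Type*}

/-- `ConnIn E X`: the restriction of the edge set `E` to `X` is connected, i.e. every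
nontrivial partition of `X` is crossed by an edge of `E` lying inside `X`. -/
def ConnIn (E : Set (Set α)) (X : Set α) : Prop :=
  ∀ X₁ X₂ : Set α, X₁ ∪ X₂ = X → Disjoint X₁ X₂ → X₁.Nonempty → X₂.Nonempty →
    ∃ e ∈ E, e ⊆ X ∧ ¬ e ⊆ X₁ ∧ ¬ e ⊆ X₂

/-- An atomic hypergraph: a carrier set together with a set of nonempty hyperedges covering
the carrier and containing all singletons. -/
structure HypergraphA (α : Type*) where
  carrier : Set α
  edges : Set (Set α)
  edges_nonempty : ∀ e ∈ edges, e.Nonempty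
  edges_sub : ∀ e ∈ edges, e ⊆ carrier
  atomic : ∀ x ∈ carrier, {x} ∈ edges

/-- A subset `X` is connected in the hypergraph `G`. -/
def HypergraphA.ConnectedIn (G : HypergraphA α) (X : Set α) : Prop := ConnIn G.edges X

/-- The hypergraph `G` is connected. -/
def HypergraphA.Connected (G : HypergraphA α) : Prop := G.ConnectedIn G.carrier

/-- Restriction of a hypergraph to a subset. -/
def HypergraphA.restrict (G : HypergraphA α) (X : Set α) : HypergraphA α where
  carrier := G.carrier ∩ X
  edges := {e | e ∈ G.edges ∧ e ⊆ X}
  edges_nonempty := fun e he => G.edges_nonempty e he.1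
  edges_sub := fun e he => Set.subset_inter (G.edges_sub e he.1) he.2
  atomic := fun x hx => ⟨G.atomic x hx.1, Set.singleton_subset_iff.2 hx.2⟩

/-- `Y` is a connected component of the hypergraph `G`: a maximal nonempty connected subset
of the carrier. -/
def IsCC (G : HypergraphA α) (Y : Set α) : Prop :=
  Y.Nonempty ∧ Y ⊆ G.carrier ∧ G.ConnectedIn Y ∧
    ∀ Z, Y ⊆ Z → Z ⊆ G.carrier → G.ConnectedIn Z → Z = Y

/-- Membership in the clan `Ξ_R` of restrictohedra: `P` is a set of carriers of the
participating hypergraphs (the restrictions `R_W`, `W ∈ P`), partitioning the carrier `V`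
of the coordinating hypergraph `R_V`, with all restrictions involved connected and `V`
finite nonempty. -/
def InXi (R : HypergraphA α) (P : Set (Set α)) (V : Set α) : Prop :=
  V.Finite ∧ V.Nonempty ∧ V ⊆ R.carrier ∧ R.ConnectedIn V ∧
    (∀ W ∈ P, W.Nonempty ∧ R.ConnectedIn W) ∧
    ⋃₀ P = V ∧
    (∀ W₁ ∈ P, ∀ W₂ ∈ P, W₁ ≠ W₂ → Disjoint W₁ W₂)

/-- The preteam `({R_W : W ∈ P}, R_V)` is a strict team: for each nonempty `B ⊆ P` and
nonempty roots `X b ⊆ b` (`b ∈ B`), each participating carrier not in `B` and each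
connected component of `R_b` minus `X b` lies inside a single connected component of
`R_V` minus `⋃_{b ∈ B} X b`. -/
def IsStrictTeamS (R : HypergraphA α) (P : Set (Set α)) (V : Set α) : Prop :=
  ∀ B ⊆ P, B.Nonempty → ∀ X : Set α → Set α,
    (∀ b ∈ B, (X b).Nonempty ∧ X b ⊆ b) →
    (∀ a ∈ P \ B, ∃ Y, IsCC ((R.restrict V).restrict (V \ ⋃ b ∈ B, X b)) Y ∧ a ⊆ Y) ∧
    (∀ b ∈ B, ∀ C, IsCC ((R.restrict b).restrict (b \ X b)) C →
      ∃ Y, IsCC ((R.restrict V).restrict (V \ ⋃ b ∈ B, X b)) Y ∧ C ⊆ Y)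

/-!
In a finite hypergraph every nonempty connected set lies in a unique connected component:
components are the maximal connected sets, and two connected sets that meet have a connected
union. Since the participants of a preteam in `Ξ_R` are pairwise disjoint, a participant outside
`B`, and a component of a participant `b ∈ B` minus its roots `X b`, avoid all the roots; being
connected they lie in components of the coordinator minus the roots. Every point of such a
component `Y` is covered by one of these pieces, so they partition `Y`. Grafting is only
bookkeeping with partitions.
-/

theorem ConnIn.mono_edges {E E' : Set (Set α)} {X : Set α}
    (h : ∀ e ∈ E, e ⊆ X → e ∈ E') (hc : ConnIn E X) : ConnIn E' X := by
  intro X₁ X₂ hu hd h1 h2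
  obtain ⟨e, he, hsub, h1', h2'⟩ := hc X₁ X₂ hu hd h1 h2
  exact ⟨e, h e he hsub, hsub, h1', h2'⟩

theorem Set.Subsingleton.connIn {E : Set (Set α)} {X : Set α} (h : X.Subsingleton) :
    ConnIn E X := by
  rintro X₁ X₂ rfl hd ⟨x, hx⟩ ⟨y, hy⟩
  obtain rfl : x = y := h (Or.inl hx) (Or.inr hy)
  exact (Set.disjoint_left.mp hd hx hy).elim

theorem ConnIn.union {E : Set (Set α)} {A B : Set α} (hA : ConnIn E A) (hB : ConnIn E B)
    (hAB : (A ∩ B).Nonempty) : ConnIn E (A ∪ B) := by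
  obtain ⟨x, hxA, hxB⟩ := hAB
  -- It suffices to treat partitions with the common point `x` on the left.
  have key : ∀ X₁ X₂ : Set α, X₁ ∪ X₂ = A ∪ B → Disjoint X₁ X₂ → X₂.Nonempty → x ∈ X₁ →
      ∃ e ∈ E, e ⊆ A ∪ B ∧ ¬ e ⊆ X₁ ∧ ¬ e ⊆ X₂ := by
    intro X₁ X₂ hu hd ⟨y, hy⟩ hx
    have crossed : ∀ C : Set α, ConnIn E C → C ⊆ A ∪ B → x ∈ C → y ∈ C →
        ∃ e ∈ E, e ⊆ A ∪ B ∧ ¬ e ⊆ X₁ ∧ ¬ e ⊆ X₂ := by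
      intro C hC hCAB hxC hyC
      obtain ⟨e, he, heC, he₁, he₂⟩ := hC (C ∩ X₁) (C ∩ X₂)
        (by rw [← Set.inter_union_distrib_left, hu, Set.inter_eq_left]; exact hCAB)
        (hd.mono Set.inter_subset_right Set.inter_subset_right) ⟨x, hxC, hx⟩ ⟨y, hyC, hy⟩
      exact ⟨e, he, heC.trans hCAB, fun h => he₁ (Set.subset_inter heC h),
        fun h => he₂ (Set.subset_inter heC h)⟩
    rcases (hu ▸ Or.inr hy : y ∈ A ∪ B) with hyA | hyB
    · exact crossed A hA Set.subset_union_left hxA hyA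
    · exact crossed B hB Set.subset_union_right hxB hyB
  intro X₁ X₂ hu hd h₁ h₂
  rcases (hu ▸ Or.inl hxA : x ∈ X₁ ∪ X₂) with hx | hx
  · exact key X₁ X₂ hu hd h₂ hx
  · obtain ⟨e, he, heAB, he₂, he₁⟩ := key X₂ X₁ (Set.union_comm X₂ X₁ ▸ hu) hd.symm h₁ hx
    exact ⟨e, he, heAB, he₁, he₂⟩

namespace HypergraphA

variable {G : HypergraphA α} {X C : Set α}

theorem ConnectedIn.of_restrict (h : (G.restrict X).ConnectedIn C) : G.ConnectedIn C :=
  ConnIn.mono_edges (fun _ he _ => he.1) h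

theorem ConnectedIn.restrict (h : G.ConnectedIn C) (hCX : C ⊆ X) :
    (G.restrict X).ConnectedIn C :=
  ConnIn.mono_edges (fun _ he heC => ⟨he, heC.trans hCX⟩) h

theorem exists_isCC_superset (hfin : G.carrier.Finite) (hne : C.Nonempty)
    (hsub : C ⊆ G.carrier) (hconn : G.ConnectedIn C) : ∃ Y, IsCC G Y ∧ C ⊆ Y := by
  have hfin' : {Z : Set α | C ⊆ Z ∧ Z ⊆ G.carrier ∧ G.ConnectedIn Z}.Finite :=
    hfin.finite_subsets.subset fun Z hZ => hZ.2.1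
  obtain ⟨Y, ⟨hCY, hYG, hY⟩, hmax⟩ :=
    hfin'.exists_maximalFor id _ ⟨C, subset_rfl, hsub, hconn⟩
  exact ⟨Y, ⟨hne.mono hCY, hYG, hY, fun Z hYZ hZG hZ =>
    (hmax ⟨hCY.trans hYZ, hZG, hZ⟩ hYZ).antisymm hYZ⟩, hCY⟩

end HypergraphA

theorem IsCC.eq_of_inter_nonempty {G : HypergraphA α} {Y₁ Y₂ : Set α}
    (h₁ : IsCC G Y₁) (h₂ : IsCC G Y₂) (h : (Y₁ ∩ Y₂).Nonempty) : Y₁ = Y₂ := by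
  have hG : Y₁ ∪ Y₂ ⊆ G.carrier := Set.union_subset h₁.2.1 h₂.2.1
  have hconn : G.ConnectedIn (Y₁ ∪ Y₂) := h₁.2.2.1.union h₂.2.2.1 h
  exact (h₁.2.2.2 _ Set.subset_union_left hG hconn).symm.trans
    (h₂.2.2.2 _ Set.subset_union_right hG hconn)

theorem IsCC.subset_of_exists {G : HypergraphA α} {Y C : Set α} (hY : IsCC G Y)
    (hCY : (C ∩ Y).Nonempty) (hC : ∃ Y', IsCC G Y' ∧ C ⊆ Y') : C ⊆ Y := by
  obtain ⟨Y', hY', hCY'⟩ := hC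
  obtain ⟨x, hxC, hxY⟩ := hCY
  exact hY'.eq_of_inter_nonempty hY ⟨x, hCY' hxC, hxY⟩ ▸ hCY'

theorem IsCC.restrict_restrict {R : HypergraphA α} {V S C : Set α}
    (h : IsCC ((R.restrict V).restrict S) C) :
    C ⊆ R.carrier ∧ C ⊆ V ∧ C ⊆ S ∧ R.ConnectedIn C :=
  ⟨fun _ hx => (h.2.1 hx).1.1, fun _ hx => (h.2.1 hx).1.2, fun _ hx => (h.2.1 hx).2,
    h.2.2.1.of_restrict.of_restrict⟩

theorem exists_isCC_restrict_restrict_superset {R : HypergraphA α} {V S C : Set α}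
    (hV : V.Finite) (hne : C.Nonempty) (hCR : C ⊆ R.carrier) (hCV : C ⊆ V) (hCS : C ⊆ S)
    (hconn : R.ConnectedIn C) : ∃ Y, IsCC ((R.restrict V).restrict S) Y ∧ C ⊆ Y :=
  HypergraphA.exists_isCC_superset (hV.subset fun _ hx => hx.1.2) hne
    (fun _ hx => ⟨⟨hCR hx, hCV hx⟩, hCS hx⟩) ((hconn.restrict hCV).restrict hCS)

theorem notMem_biUnion_of_pairwiseDisjoint {P B : Set (Set α)} {X : Set α → Set α}
    {a : Set α} {x : α} (hdisj : ∀ W₁ ∈ P, ∀ W₂ ∈ P, W₁ ≠ W₂ → Disjoint W₁ W₂)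
    (hBP : B ⊆ P) (hX : ∀ b ∈ B, X b ⊆ b) (ha : a ∈ P) (hxa : x ∈ a)
    (hxX : a ∈ B → x ∉ X a) : x ∉ ⋃ b ∈ B, X b := by
  simp only [Set.mem_iUnion, not_exists]
  intro b hb hxb
  by_cases hab : a = b
  · exact hxX (hab ▸ hb) (hab ▸ hxb)
  · exact Set.disjoint_left.mp (hdisj a ha b (hBP hb) hab) hxa (hX b hb hxb)

namespace InXi

variable {R : HypergraphA α} {P B : Set (Set α)} {V : Set α} {X : Set α → Set α}

theorem subset_of_mem (h : InXi R P V) {W : Set α} (hW : W ∈ P) : W ⊆ V :=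
  h.2.2.2.2.2.1 ▸ Set.subset_sUnion_of_mem hW

theorem exists_isCC_superset_of_mem_diff (h : InXi R P V) (hBP : B ⊆ P)
    (hX : ∀ b ∈ B, X b ⊆ b) {a : Set α} (ha : a ∈ P \ B) :
    ∃ Y, IsCC ((R.restrict V).restrict (V \ ⋃ b ∈ B, X b)) Y ∧ a ⊆ Y := by
  have haV := h.subset_of_mem ha.1
  exact exists_isCC_restrict_restrict_superset h.1 (h.2.2.2.2.1 a ha.1).1
    (haV.trans h.2.2.1) haV
    (fun x hx => ⟨haV hx, notMem_biUnion_of_pairwiseDisjoint h.2.2.2.2.2.2 hBP hX ha.1 hx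
      fun haB => (ha.2 haB).elim⟩)
    (h.2.2.2.2.1 a ha.1).2

theorem exists_isCC_superset_of_isCC_root (h : InXi R P V) (hBP : B ⊆ P)
    (hX : ∀ b ∈ B, X b ⊆ b) {b C : Set α} (hb : b ∈ B)
    (hC : IsCC ((R.restrict b).restrict (b \ X b)) C) :
    ∃ Y, IsCC ((R.restrict V).restrict (V \ ⋃ b ∈ B, X b)) Y ∧ C ⊆ Y := by
  obtain ⟨hCR, hCb, hCbX, hconn⟩ := hC.restrict_restrict
  have hCV := hCb.trans (h.subset_of_mem (hBP hb))
  exact exists_isCC_restrict_restrict_superset h.1 hC.1 hCR hCV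
    (fun x hx => ⟨hCV hx, notMem_biUnion_of_pairwiseDisjoint h.2.2.2.2.2.2 hBP hX (hBP hb)
      (hCb hx) fun _ => (hCbX hx).2⟩) hconn

theorem isStrictTeamS (h : InXi R P V) : IsStrictTeamS R P V :=
  fun _ hBP _ _ hX =>
    ⟨fun _ ha => h.exists_isCC_superset_of_mem_diff hBP (fun b hb => (hX b hb).2) ha,
      fun _ hb _ hC => h.exists_isCC_superset_of_isCC_root hBP (fun b hb => (hX b hb).2) hb hC⟩

theorem subset_sUnion_induced (h : InXi R P V) (hBP : B ⊆ P) (hX : ∀ b ∈ B, X b ⊆ b)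
    {Y : Set α} (hY : IsCC ((R.restrict V).restrict (V \ ⋃ b ∈ B, X b)) Y) :
    Y ⊆ ⋃₀ ({C | C ∈ P \ B ∧ C ⊆ Y} ∪
      {C | ∃ b ∈ B, IsCC ((R.restrict b).restrict (b \ X b)) C ∧ C ⊆ Y}) := by
  intro x hxY
  obtain ⟨-, hYV, hYS, -⟩ := hY.restrict_restrict
  obtain ⟨a, haP, hxa⟩ := (h.2.2.2.2.2.1 ▸ hYV hxY : x ∈ ⋃₀ P)
  by_cases haB : a ∈ B
  · have hxX : x ∉ X a := fun hx => (hYS hxY).2 (Set.mem_biUnion haB hx)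
    have haV := h.subset_of_mem haP
    obtain ⟨C, hC, hxC⟩ := exists_isCC_restrict_restrict_superset (R := R) (S := a \ X a)
      (h.1.subset haV) (Set.singleton_nonempty x)
      (Set.singleton_subset_iff.2 (h.2.2.1 (haV hxa))) (Set.singleton_subset_iff.2 hxa)
      (Set.singleton_subset_iff.2 ⟨hxa, hxX⟩) Set.subsingleton_singleton.connIn
    have hxC : x ∈ C := hxC rfl
    refine ⟨C, Or.inr ⟨a, haB, hC, hY.subset_of_exists ⟨x, hxC, hxY⟩ ?_⟩, hxC⟩
    exact h.exists_isCC_superset_of_isCC_root hBP hX haB hC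
  · exact ⟨a, Or.inl ⟨⟨haP, haB⟩, hY.subset_of_exists ⟨x, hxa, hxY⟩
      (h.exists_isCC_superset_of_mem_diff hBP hX ⟨haP, haB⟩)⟩, hxa⟩

theorem pairwiseDisjoint_induced (h : InXi R P V) (hBP : B ⊆ P) {Y : Set α} :
    ∀ W₁ ∈ ({C | C ∈ P \ B ∧ C ⊆ Y} ∪
        {C | ∃ b ∈ B, IsCC ((R.restrict b).restrict (b \ X b)) C ∧ C ⊆ Y}),
      ∀ W₂ ∈ ({C | C ∈ P \ B ∧ C ⊆ Y} ∪
        {C | ∃ b ∈ B, IsCC ((R.restrict b).restrict (b \ X b)) C ∧ C ⊆ Y}),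
      W₁ ≠ W₂ → Disjoint W₁ W₂ := by
  have hdisj := h.2.2.2.2.2.2
  have mixed : ∀ W₁ ∈ P \ B, ∀ W₂, (∃ b ∈ B,
      IsCC ((R.restrict b).restrict (b \ X b)) W₂ ∧ W₂ ⊆ Y) → Disjoint W₁ W₂ := by
    rintro W₁ ⟨h₁P, h₁B⟩ W₂ ⟨b, hb, hC, -⟩
    exact (hdisj W₁ h₁P b (hBP hb) (by rintro rfl; exact h₁B hb)).mono_right
      hC.restrict_restrict.2.1
  rintro W₁ (⟨h₁, -⟩ | h₁) W₂ (⟨h₂, -⟩ | h₂) hne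
  · exact hdisj W₁ h₁.1 W₂ h₂.1 hne
  · exact mixed W₁ h₁ W₂ h₂
  · exact (mixed W₂ h₂ W₁ h₁).symm
  · obtain ⟨b₁, hb₁, hC₁, -⟩ := h₁
    obtain ⟨b₂, hb₂, hC₂, -⟩ := h₂
    by_cases hb : b₁ = b₂
    · subst hb
      exact Set.disjoint_iff_inter_eq_empty.2 <| Set.not_nonempty_iff_eq_empty.1
        fun hmeet => hne (hC₁.eq_of_inter_nonempty hC₂ hmeet)
    · exact (hdisj b₁ (hBP hb₁) b₂ (hBP hb₂) hb).mono
        hC₁.restrict_restrict.2.1 hC₂.restrict_restrict.2.1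

theorem induced (h : InXi R P V) (hBP : B ⊆ P) (hX : ∀ b ∈ B, X b ⊆ b) {Y : Set α}
    (hY : IsCC ((R.restrict V).restrict (V \ ⋃ b ∈ B, X b)) Y) :
    InXi R ({C | C ∈ P \ B ∧ C ⊆ Y} ∪
      {C | ∃ b ∈ B, IsCC ((R.restrict b).restrict (b \ X b)) C ∧ C ⊆ Y}) Y := by
  obtain ⟨hYR, hYV, -, hconn⟩ := hY.restrict_restrict
  refine ⟨h.1.subset hYV, hY.1, hYR, hconn, ?_, ?_, h.pairwiseDisjoint_induced hBP⟩
  · rintro W (⟨hW, -⟩ | ⟨b, -, hC, -⟩)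
    · exact h.2.2.2.2.1 W hW.1
    · exact ⟨hC.1, hC.restrict_restrict.2.2.2⟩
  · refine (Set.sUnion_subset ?_).antisymm (h.subset_sUnion_induced hBP hX hY)
    rintro W (⟨-, hWY⟩ | ⟨-, -, -, hWY⟩) <;> exact hWY

theorem graft {P' : Set (Set α)} {V₀ : Set α} (h : InXi R P V) (hV₀ : V₀ ∈ P)
    (h' : InXi R P' V₀) : InXi R ((P \ {V₀}) ∪ P') V := by
  obtain ⟨hVfin, hVne, hVR, hVconn, hpart, hcover, hdisj⟩ := h
  obtain ⟨-, -, -, -, hpart', hcover', hdisj'⟩ := h'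
  have hV₀V : V₀ ⊆ V := hcover ▸ Set.subset_sUnion_of_mem hV₀
  have hP'V₀ : ∀ W ∈ P', W ⊆ V₀ := fun W hW => hcover' ▸ Set.subset_sUnion_of_mem hW
  refine ⟨hVfin, hVne, hVR, hVconn, ?_, ?_, ?_⟩
  · rintro W (⟨hW, -⟩ | hW)
    exacts [hpart W hW, hpart' W hW]
  · refine (Set.sUnion_subset ?_).antisymm ?_
    · rintro W (⟨hW, -⟩ | hW)
      exacts [hcover ▸ Set.subset_sUnion_of_mem hW, (hP'V₀ W hW).trans hV₀V]
    · rintro x hx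
      obtain ⟨a, haP, hxa⟩ := (hcover ▸ hx : x ∈ ⋃₀ P)
      by_cases ha : a = V₀
      · subst ha
        obtain ⟨W, hW, hxW⟩ := (hcover' ▸ hxa : x ∈ ⋃₀ P')
        exact ⟨W, Or.inr hW, hxW⟩
      · exact ⟨a, Or.inl ⟨haP, ha⟩, hxa⟩
  · rintro W₁ (⟨h₁P, h₁⟩ | h₁) W₂ (⟨h₂P, h₂⟩ | h₂) hne
    · exact hdisj W₁ h₁P W₂ h₂P hne
    · exact (hdisj W₁ h₁P V₀ hV₀ h₁).mono_right (hP'V₀ W₂ h₂)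
    · exact ((hdisj W₂ h₂P V₀ hV₀ h₂).mono_right (hP'V₀ W₁ h₁)).symm
    · exact hdisj' W₁ h₁ W₂ h₂ hne

end InXi

/-- For every hypergraph `R`, the collection `Ξ_R` of preteams of connected restrictions of
`R` is an associative strict clan:
(i) every preteam in `Ξ_R` is a strict team;
(ii) `Ξ_R` is closed under the induced decompositions: removing nonempty roots `X b ⊆ b`
for `b` in a nonempty `B ⊆ P` and passing to a connected component `Y` of the coordinating
hypergraph minus the roots, the induced preteam (whose participants are the carriers `a ∈
P \ B` contained in `Y` and the components of the `R_b` minus `X b` contained in `Y`) is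
again in `Ξ_R`;
(iii) `Ξ_R` is closed under grafting a preteam of `Ξ_R` into another along a matching
participating hypergraph. -/
theorem stmt12 (R : HypergraphA α) :
    (∀ P V, InXi R P V → IsStrictTeamS R P V) ∧
    (∀ P V, InXi R P V → ∀ B ⊆ P, B.Nonempty → ∀ X : Set α → Set α,
      (∀ b ∈ B, (X b).Nonempty ∧ X b ⊆ b) →
      ∀ Y, IsCC ((R.restrict V).restrict (V \ ⋃ b ∈ B, X b)) Y →
        InXi R ({C | C ∈ P \ B ∧ C ⊆ Y} ∪
          {C | ∃ b ∈ B, IsCC ((R.restrict b).restrict (b \ X b)) C ∧ C ⊆ Y}) Y) ∧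
    (∀ P V V₀ P', InXi R P V → V₀ ∈ P → InXi R P' V₀ →
      InXi R ((P \ {V₀}) ∪ P') V) :=
  ⟨fun _ _ h => h.isStrictTeamS,
    fun _ _ h _ hBP _ _ hX _ hY => h.induced hBP (fun b hb => (hX b hb).2) hY,
    fun _ _ _ _ h hV₀ h' => h.graft hV₀ h'⟩
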